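/- arXiv:1810.01704 — 2 statements merged into one kernel-verified Lean document; each statement's English description precedes it below -/
import Mathlib

section
/- For every d ∈ ℕ there exists n ∈ ℕ such that the following holds: for every l ∈ ℕ, every Heyting algebra H of dimension ≤ d, every Heyting algebra H′, and all tuples ā ∈ H^l, ā′ ∈ H′^l, if for every Heyting term t in l variables of degree ≤ n one has t(ā) = ⊤ in H iff t(ā′) = ⊤ in H′, then for every Heyting term t in l variables (of arbitrary degree) one has t(ā) = ⊤ in H iff t(ā′) = ⊤ in H′. -/
/-- Formal Heyting terms in `n` variables. -/
inductive HeytingTerm (n : ℕ) : Type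
  | var : Fin n → HeytingTerm n
  | bot : HeytingTerm n
  | top : HeytingTerm n
  | inf : HeytingTerm n → HeytingTerm n → HeytingTerm n
  | sup : HeytingTerm n → HeytingTerm n → HeytingTerm n
  | himp : HeytingTerm n → HeytingTerm n → HeytingTerm n

namespace HeytingTerm

/-- Evaluation of a Heyting term in a Heyting algebra. -/
def eval {n : ℕ} {H : Type*} [HeytingAlgebra H] (v : Fin n → H) : HeytingTerm n → H
  | var i => v i
  | bot => ⊥
  | top => ⊤
  | inf a b => a.eval v ⊓ b.eval v
  | sup a b => a.eval v ⊔ b.eval v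
  | himp a b => a.eval v ⇨ b.eval v

/-- The degree of a Heyting term: the maximal number of nested occurrences of `⇨`. -/
def degree {n : ℕ} : HeytingTerm n → ℕ
  | var _ => 0
  | bot => 0
  | top => 0
  | inf a b => max a.degree b.degree
  | sup a b => max a.degree b.degree
  | himp a b => max a.degree b.degree + 1

end HeytingTerm

/-- `StrongOrd b a` means `b ≫ a`, i.e. `b ⇨ a = a` and `a ≤ b`. -/
def StrongOrd {H : Type*} [HeytingAlgebra H] (b a : H) : Prop := b ⇨ a = a ∧ a ≤ b

/-- `H` has dimension `≤ d`: there is no chain `x₀, …, x_{d+1}` with `x_{d+1} ≠ ⊤` and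
`x_{i+1} ≫ x_i` for all `0 ≤ i ≤ d`. -/
def DimLE (H : Type*) [HeytingAlgebra H] (d : ℕ) : Prop :=
  ¬ ∃ x : Fin (d + 2) → H, x (Fin.last (d + 1)) ≠ ⊤ ∧
      ∀ i : Fin (d + 1), StrongOrd (x i.succ) (x i.castSucc)

/-!
Replace `H` by its Heyting subalgebra generated by `a`, so that every element is a value `t(a)`.
A strict chain of prime filters `w₀ < ⋯ < w_k` of `H` yields a chain `x₀ ≪ ⋯ ≪ x_k` with
`x_k ∉ w₀` (step from `x` to `(c ⊔ x) ⊔ ((c ⊔ x) ⇨ x)` with `c ∈ w_{i+1} \ w_i`), so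
the prime spectrum has height at most `d`. Descending recursion along it defines for every
prime filter `w` the characteristic term
  `χ_w = ⋀_{a_i ∈ w} p_i ⊓ (θ_w ⇨ σ_w)`,
  `θ_w = ⋁_{a_i ∉ w} p_i ⊔ ⋁_{u > w} (χ_u ⇨ σ_u)`,  `σ_w = ⋁_{u > w} χ_u`,
of degree at most `2d + 1`; by induction on the height only finitely many terms occur.

For every term `t` and every tuple `b` of any Heyting algebra, `χ_w(b) ≤ t(b)` if `t(a) ∈ w`,
and otherwise `χ_w(b) ⊓ t(b) ≤ X_w(b)`, where `X_w` is the join of the `χ_u` with `u > w` and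
`t(a) ∈ u`. In `H` itself, `χ_w(a) ∈ u` exactly when `w ≤ u`. So if `t(a) = ⊤`, then
`⋁_w χ_w` is `⊤` at `a`, hence at `b`, and lies below `t` at `b`; and if `t(a) ∉ w`, the term
`χ_w ⇨ X_w` of degree at most `2d + 2` is `⊤` at `b` when `t(b) = ⊤`, but not at `a`.
-/

namespace Order.PFilter

variable {α : Type*} {x y : α}

theorem IsPrime.mem_or_mem [SemilatticeSup α] {F : PFilter α} (hF : F.IsPrime)
    (h : x ⊔ y ∈ F) : x ∈ F ∨ y ∈ F := by
  by_contra! hxy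
  exact Ideal.sup_mem (s := hF.compl_ideal.toIdeal) hxy.1 hxy.2 h

theorem IsPrime.bot_notMem [Preorder α] [OrderBot α] {F : PFilter α} (hF : F.IsPrime) :
    (⊥ : α) ∉ F :=
  Ideal.bot_mem hF.compl_ideal.toIdeal

theorem IsPrime.exists_mem_of_finset_sup_mem {ι : Type*} [Lattice α] [OrderBot α]
    {F : PFilter α} (hF : F.IsPrime) {s : Finset ι} {f : ι → α} (h : s.sup f ∈ F) :
    ∃ i ∈ s, f i ∈ F := by
  revert h
  refine Finset.sup_induction (p := fun z => z ∈ F → ∃ i ∈ s, f i ∈ F)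
    (fun h => (hF.bot_notMem h).elim) (fun z hz z' hz' h => ?_) fun i hi h => ⟨i, hi, h⟩
  exact (hF.mem_or_mem h).elim hz hz'

theorem finset_inf_mem {ι : Type*} [SemilatticeInf α] [OrderTop α] {F : PFilter α}
    {s : Finset ι} {f : ι → α} (h : ∀ i ∈ s, f i ∈ F) : s.inf f ∈ F :=
  Finset.inf_induction top_mem (fun _ hz _ hz' => inf_mem hz hz') h

theorem exists_isPrime_le_notMem [DistribLattice α] {F : PFilter α} (h : x ∉ F) :
    ∃ G : PFilter α, G.IsPrime ∧ F ≤ G ∧ x ∉ G := by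
  have hdisj : Disjoint (F : Set α) (Ideal.principal x) :=
    Set.disjoint_left.2 fun y hy hyx => h (mem_of_le (Ideal.mem_principal.1 hyx) hy)
  obtain ⟨J, hJ, hxJ, hFJ⟩ := DistribLattice.prime_ideal_of_disjoint_filter_ideal hdisj
  have hG : (hJ.toPrimePair.F : Set α) = (J : Set α)ᶜ := hJ.toPrimePair.compl_I_eq_F.symm
  refine ⟨hJ.toPrimePair.F, hJ.toPrimePair.F_isPrime, fun y hy => ?_, fun hx => ?_⟩
  · rw [← SetLike.mem_coe, hG]
    exact Set.disjoint_left.1 hFJ hy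
  · rw [← SetLike.mem_coe, hG] at hx
    exact hx (hxJ Ideal.mem_principal_self)

theorem exists_isPrime_notMem [DistribLattice α] [OrderTop α] (hx : x ≠ ⊤) :
    ∃ F : PFilter α, F.IsPrime ∧ x ∉ F :=
  let ⟨F, hF, _, hxF⟩ := exists_isPrime_le_notMem (F := principal ⊤) (by simpa using hx)
  ⟨F, hF, hxF⟩

theorem himp_mem_iff [HeytingAlgebra α] {F : PFilter α} :
    x ⇨ y ∈ F ↔ ∀ G : PFilter α, G.IsPrime → F ≤ G → x ∈ G → y ∈ G := by
  refine ⟨fun h G _ hFG hx => mem_of_le himp_inf_le (inf_mem (hFG h) hx), fun h => ?_⟩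
  by_contra hxy
  -- the filter of all `z` with `x ⇨ z ∈ F` contains `F` and `x` but not `y`
  have hF' : IsPFilter {z | x ⇨ z ∈ F} := .of_def ⟨⊤, by simp⟩
    (fun z hz z' hz' => ⟨z ⊓ z', by
      rw [Set.mem_ofPred_eq, himp_inf_distrib]; exact inf_mem hz hz', inf_le_left, inf_le_right⟩)
    fun hzz' hz => mem_of_le (himp_le_himp_left hzz') hz
  obtain ⟨G, hG, hFG, hyG⟩ := exists_isPrime_le_notMem (F := hF'.toPFilter) (x := y) hxy
  exact hyG (h G hG (fun z hz => hFG (show x ⇨ z ∈ F from mem_of_le le_himp hz))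
    (hFG (show x ⇨ x ∈ F by simp)))

end Order.PFilter

theorem Order.wellFoundedGT_of_coheight_lt_top {α : Type*} [Preorder α]
    (h : ∀ w : α, Order.coheight w < ⊤) : WellFoundedGT α :=
  ⟨Subrelation.wf (fun hlt => Order.coheight_strictAnti hlt (h _))
    (InvImage.wf Order.coheight wellFounded_lt)⟩

theorem Order.coheight_lt_of_lt {α : Type*} [Preorder α] {w u : α} (h : w < u) {k : ℕ}
    (hw : Order.coheight w < k + 1) : Order.coheight u < k :=
  lt_of_add_lt_add_right ((Order.coheight_add_one_le h).trans_lt hw)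

abbrev PrimeFilter (α : Type*) [Preorder α] := {F : Order.PFilter α // F.IsPrime}

section Dimension

open Order

variable {H : Type*} [HeytingAlgebra H]

theorem strongOrd_sup_himp {x y : H} (h : y ≤ x) : StrongOrd (x ⊔ (x ⇨ y)) y := by
  refine ⟨le_antisymm ?_ (le_himp_iff.2 inf_le_left), h.trans le_sup_left⟩
  rw [sup_himp_distrib]
  exact inf_comm (x ⇨ y) _ ▸ himp_inf_le

theorem exists_strongOrd_notMem_of_lt {F G : PFilter H} (hF : F.IsPrime) (hFG : F < G)
    {s : H} (hs : s ∉ G) : ∃ s' ∉ F, StrongOrd s' s := by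
  obtain ⟨c, hcG, hcF⟩ := SetLike.exists_of_lt hFG
  refine ⟨(c ⊔ s) ⊔ ((c ⊔ s) ⇨ s), fun h => ?_, strongOrd_sup_himp le_sup_right⟩
  rcases hF.mem_or_mem h with h | h
  · exact (hF.mem_or_mem h).elim hcF fun h => hs (hFG.le h)
  · exact hs (PFilter.mem_of_le himp_inf_le
      (PFilter.inf_mem (hFG.le h) (PFilter.mem_of_le le_sup_left hcG)))

theorem exists_strongOrd_chain {n : ℕ} (p : Fin (n + 1) → PrimeFilter H) (hp : StrictMono p) :
    ∃ x : Fin (n + 1) → H, x (Fin.last n) ∉ (p 0).1 ∧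
      ∀ i : Fin n, StrongOrd (x i.succ) (x i.castSucc) := by
  induction n with
  | zero => exact ⟨fun _ => ⊥, (p 0).2.bot_notMem, fun i => i.elim0⟩
  | succ n ih =>
    obtain ⟨x, hx, hchain⟩ := ih (p ∘ Fin.succ) (hp.comp Fin.strictMono_succ)
    obtain ⟨y, hy, hxy⟩ := exists_strongOrd_notMem_of_lt (p 0).2 (hp (Fin.succ_pos 0)) hx
    refine ⟨Fin.snoc x y, by simpa using hy, fun i => ?_⟩
    induction i using Fin.lastCases with
    | last => simpa using hxy
    | cast i =>
      rw [Fin.succ_castSucc, Fin.snoc_castSucc, Fin.snoc_castSucc]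
      exact hchain i

theorem DimLE.coheight_le {d : ℕ} (hd : DimLE H d) (w : PrimeFilter H) : coheight w ≤ d := by
  refine Order.coheight_le fun p _ => ?_
  by_contra! hlen
  have hle : d + 2 ≤ p.length + 1 := by norm_cast at hlen; omega
  obtain ⟨x, hx, hchain⟩ := exists_strongOrd_chain (n := d + 1) (p ∘ Fin.castLE hle)
    (p.strictMono.comp (Fin.strictMono_castLE hle))
  exact hd ⟨x, fun h => hx (h ▸ PFilter.top_mem), hchain⟩

theorem DimLE.of_injective {H₀ : Type*} [HeytingAlgebra H₀] (f : HeytingHom H₀ H)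
    (hf : Function.Injective f) {d : ℕ} (h : DimLE H d) : DimLE H₀ d := by
  rintro ⟨x, hx, hchain⟩
  refine h ⟨f ∘ x, fun hfx => hx (hf (hfx.trans (map_top f).symm)), fun i => ?_⟩
  exact ⟨by simp [← map_himp, (hchain i).1], OrderHomClass.mono f (hchain i).2⟩

end Dimension

theorem inf_himp_le_of_le {α : Type*} [HeytingAlgebra α] {c x y : α} (h : c ≤ x) :
    c ⊓ (x ⇨ y) ≤ c ⊓ y :=
  le_inf inf_le_left ((inf_le_inf_right _ h).trans (inf_himp x y ▸ inf_le_right))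

namespace HeytingTerm

variable {l : ℕ}

-- Finite joins and meets of sets of terms, with junk values `⊥` and `⊤` on infinite sets.
open Classical in
noncomputable def bigSup (s : Set (HeytingTerm l)) : HeytingTerm l :=
  if hs : s.Finite then hs.toFinset.toList.foldr sup bot else bot

open Classical in
noncomputable def bigInf (s : Set (HeytingTerm l)) : HeytingTerm l :=
  if hs : s.Finite then hs.toFinset.toList.foldr inf top else top

theorem degree_foldr_le {op : HeytingTerm l → HeytingTerm l → HeytingTerm l} {e : HeytingTerm l}
    {n : ℕ} (hop : ∀ t t', (op t t').degree = max t.degree t'.degree) (he : e.degree = 0)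
    {L : List (HeytingTerm l)} (h : ∀ t ∈ L, t.degree ≤ n) : (L.foldr op e).degree ≤ n := by
  induction L with
  | nil => simp [he]
  | cons t L ih =>
    rw [List.foldr_cons, hop]
    exact max_le (h t (by simp)) (ih fun t' ht' => h t' (by simp [ht']))

theorem degree_bigSup_le {s : Set (HeytingTerm l)} {n : ℕ} (h : ∀ t ∈ s, t.degree ≤ n) :
    (bigSup s).degree ≤ n := by
  unfold bigSup
  split_ifs with hs
  · exact degree_foldr_le (fun _ _ => rfl) rfl fun t ht => h t (by simpa using ht)
  · exact Nat.zero_le n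

theorem degree_bigInf_le {s : Set (HeytingTerm l)} {n : ℕ} (h : ∀ t ∈ s, t.degree ≤ n) :
    (bigInf s).degree ≤ n := by
  unfold bigInf
  split_ifs with hs
  · exact degree_foldr_le (fun _ _ => rfl) rfl fun t ht => h t (by simpa using ht)
  · exact Nat.zero_le n

section Eval

variable {K : Type*} [HeytingAlgebra K] (b : Fin l → K) {s : Set (HeytingTerm l)}

theorem eval_foldr_sup [DecidableEq (HeytingTerm l)] (L : List (HeytingTerm l)) :
    (L.foldr sup bot).eval b = L.toFinset.sup (eval b) := by
  induction L with
  | nil => rfl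
  | cons t L ih => simp [eval, ih]

theorem eval_foldr_inf [DecidableEq (HeytingTerm l)] (L : List (HeytingTerm l)) :
    (L.foldr inf top).eval b = L.toFinset.inf (eval b) := by
  induction L with
  | nil => rfl
  | cons t L ih => simp [eval, ih]

theorem eval_bigSup (hs : s.Finite) : (bigSup s).eval b = hs.toFinset.sup (eval b) := by
  classical
  rw [bigSup, dif_pos hs, eval_foldr_sup, Finset.toList_toFinset]

theorem eval_bigInf (hs : s.Finite) : (bigInf s).eval b = hs.toFinset.inf (eval b) := by
  classical
  rw [bigInf, dif_pos hs, eval_foldr_inf, Finset.toList_toFinset]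

theorem le_eval_bigSup (hs : s.Finite) {t : HeytingTerm l} (ht : t ∈ s) :
    t.eval b ≤ (bigSup s).eval b := by
  rw [eval_bigSup b hs]
  exact Finset.le_sup (hs.mem_toFinset.2 ht)

theorem eval_bigSup_inf_le {c y : K} (h : ∀ t ∈ s, t.eval b ⊓ c ≤ y) :
    (bigSup s).eval b ⊓ c ≤ y := by
  by_cases hs : s.Finite
  · rw [eval_bigSup b hs, Finset.sup_inf_distrib_right]
    exact Finset.sup_le fun t ht => h t (hs.mem_toFinset.1 ht)
  · simp [bigSup, hs, eval]

theorem eval_bigSup_le {y : K} (h : ∀ t ∈ s, t.eval b ≤ y) : (bigSup s).eval b ≤ y := by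
  simpa using eval_bigSup_inf_le b (c := ⊤) (by simpa using h)

theorem eval_bigInf_le (hs : s.Finite) {t : HeytingTerm l} (ht : t ∈ s) :
    (bigInf s).eval b ≤ t.eval b := by
  rw [eval_bigInf b hs]
  exact Finset.inf_le (hs.mem_toFinset.2 ht)

theorem exists_mem_of_eval_bigSup_mem {F : Order.PFilter K} (hF : F.IsPrime)
    (h : (bigSup s).eval b ∈ F) : ∃ t ∈ s, t.eval b ∈ F := by
  by_cases hs : s.Finite
  · rw [eval_bigSup b hs] at h
    obtain ⟨t, ht, htF⟩ := hF.exists_mem_of_finset_sup_mem h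
    exact ⟨t, hs.mem_toFinset.1 ht, htF⟩
  · simp only [bigSup, hs, dite_false, eval] at h
    exact (hF.bot_notMem h).elim

theorem eval_bigInf_mem {F : Order.PFilter K} (h : ∀ t ∈ s, t.eval b ∈ F) :
    (bigInf s).eval b ∈ F := by
  by_cases hs : s.Finite
  · rw [eval_bigInf b hs]
    exact Order.PFilter.finset_inf_mem fun t ht => h t (hs.mem_toFinset.1 ht)
  · simp only [bigInf, hs, dite_false, eval]
    exact Order.PFilter.top_mem

end Eval

-- `charStep {i | a i ∈ w} {(χ_u, σ_u) | u > w} = (χ_w, σ_w)`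
noncomputable def charStep (I : Set (Fin l)) (S : Set (HeytingTerm l × HeytingTerm l)) :
    HeytingTerm l × HeytingTerm l :=
  (.inf (bigInf (var '' I))
    (.himp (.sup (bigSup (var '' Iᶜ)) (bigSup ((fun p => .himp p.1 p.2) '' S)))
      (bigSup (Prod.fst '' S))),
    bigSup (Prod.fst '' S))

section Characters

open Order

variable {H : Type*} [HeytingAlgebra H] [WellFoundedGT (PrimeFilter H)] (a : Fin l → H)

noncomputable def charPair : PrimeFilter H → HeytingTerm l × HeytingTerm l :=
  WellFoundedGT.fix fun w rec =>
    charStep {i | a i ∈ w.1} (Set.range fun u : Set.Ioi w => rec u u.2)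

-- `char a w = χ_w`, `charGuard a w = θ_w`, `charAbove a w x = ⋁_{u > w, x ∈ u} χ_u`,
-- so that `σ_w = charAbove a w ⊤`.
noncomputable def char (w : PrimeFilter H) : HeytingTerm l := (charPair a w).1

noncomputable def charAbove (w : PrimeFilter H) (x : H) : HeytingTerm l :=
  bigSup (char a '' {u | w < u ∧ x ∈ u.1})

noncomputable def charGuard (w : PrimeFilter H) : HeytingTerm l :=
  .sup (bigSup (var '' {i | a i ∈ w.1}ᶜ))
    (bigSup ((fun u => .himp (char a u) (charAbove a u ⊤)) '' Set.Ioi w))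

theorem charPair_eq (w : PrimeFilter H) :
    charPair a w = charStep {i | a i ∈ w.1} (charPair a '' Set.Ioi w) := by
  rw [charPair, WellFoundedGT.fix_eq, Set.image_eq_range]

theorem snd_charPair (w : PrimeFilter H) : (charPair a w).2 = charAbove a w ⊤ := by
  rw [charPair_eq, charStep, charAbove]
  simp only [Set.image_image, Order.PFilter.top_mem, and_true]
  rfl

theorem char_eq (w : PrimeFilter H) :
    char a w =
      .inf (bigInf (var '' {i | a i ∈ w.1})) (.himp (charGuard a w) (charAbove a w ⊤)) := by
  rw [char, charPair_eq, charStep, charGuard, ← snd_charPair, charPair_eq, charStep]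
  simp only [Set.image_image, snd_charPair]
  rfl

theorem finite_charPair_image (k : ℕ) : (charPair a '' {w | coheight w < k}).Finite := by
  induction k with
  | zero => simp
  | succ k ih =>
    refine ((Set.finite_univ.prod ih.finite_subsets).image fun p => charStep p.1 p.2).subset ?_
    rintro _ ⟨w, hw, rfl⟩
    refine ⟨({i | a i ∈ w.1}, charPair a '' Set.Ioi w), ⟨trivial, ?_⟩,
      (charPair_eq a w).symm⟩
    exact Set.image_mono fun u hu => coheight_lt_of_lt hu (by simpa using hw)

theorem finite_range_charPair {d : ℕ} (hd : ∀ w : PrimeFilter H, coheight w ≤ d) :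
    (Set.range (charPair a)).Finite := by
  refine (finite_charPair_image a (d + 1)).subset ?_
  rintro _ ⟨w, rfl⟩
  exact ⟨w, (hd w).trans_lt (by norm_cast; omega), rfl⟩

theorem degree_char_lt_add_two {w : PrimeFilter H} {m : ℕ}
    (h : ∀ u, w < u → (char a u).degree < m) : (char a w).degree < m + 2 := by
  have habove : ∀ u, w ≤ u → (charAbove a u ⊤).degree ≤ m - 1 := fun u hwu =>
    degree_bigSup_le <| by
      rintro _ ⟨v, ⟨huv, -⟩, rfl⟩
      have := h v (hwu.trans_lt huv)
      omega
  have hguard : (charGuard a w).degree ≤ m := by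
    refine max_le (degree_bigSup_le ?_) (degree_bigSup_le ?_)
    · rintro _ ⟨i, -, rfl⟩
      exact Nat.zero_le m
    · rintro _ ⟨u, hu, rfl⟩
      have := h u hu
      have := habove u hu.le
      change max _ _ + 1 ≤ m
      omega
  have hlit : (bigInf (var '' {i | a i ∈ w.1})).degree = 0 :=
    Nat.le_zero.1 (degree_bigInf_le (by rintro _ ⟨i, -, rfl⟩; exact le_rfl))
  have := habove w le_rfl
  rw [char_eq]
  change max _ (max _ _ + 1) < m + 2
  omega

theorem degree_char_lt (k : ℕ) (w : PrimeFilter H) (hw : coheight w < k) :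
    (char a w).degree < 2 * k := by
  induction k generalizing w with
  | zero => simp at hw
  | succ k ih =>
    exact degree_char_lt_add_two a fun u hu => ih u (coheight_lt_of_lt hu (by simpa using hw))

theorem degree_char_le {d : ℕ} (hd : ∀ w : PrimeFilter H, coheight w ≤ d)
    (w : PrimeFilter H) : (char a w).degree ≤ 2 * d + 1 := by
  have := degree_char_lt a (d + 1) w ((hd w).trans_lt (by norm_cast; omega))
  omega

theorem degree_charAbove_le {d : ℕ} (hd : ∀ w : PrimeFilter H, coheight w ≤ d)
    (w : PrimeFilter H) (x : H) : (charAbove a w x).degree ≤ 2 * d + 1 :=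
  degree_bigSup_le <| by
    rintro _ ⟨u, -, rfl⟩
    exact degree_char_le a hd u

end Characters

section Bounds

open Order PFilter

variable {H : Type*} [HeytingAlgebra H] [WellFoundedGT (PrimeFilter H)] {a : Fin l → H}
  {K : Type*} [HeytingAlgebra K] (b : Fin l → K) {w u : PrimeFilter H} {x x' z : H} {y y' : K}

theorem finite_range_char (hfin : (Set.range (charPair a)).Finite) :
    (Set.range (char a)).Finite := by
  have := hfin.image Prod.fst
  rwa [← Set.range_comp] at this

theorem eval_char_le_of_mem {i : Fin l} (hi : a i ∈ w.1) : (char a w).eval b ≤ b i := by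
  rw [char_eq]
  exact inf_le_left.trans (eval_bigInf_le b (Set.toFinite _) (Set.mem_image_of_mem var hi))

theorem eval_char_inf_charGuard_le (w : PrimeFilter H) :
    (char a w).eval b ⊓ (charGuard a w).eval b ≤ (charAbove a w ⊤).eval b := by
  rw [char_eq]
  exact (inf_le_inf_right _ inf_le_right).trans himp_inf_le

theorem le_eval_charGuard_of_notMem {i : Fin l} (hi : a i ∉ w.1) :
    b i ≤ (charGuard a w).eval b :=
  (le_eval_bigSup b (Set.toFinite _) (Set.mem_image_of_mem var hi)).trans le_sup_left

theorem himp_le_eval_charGuard (hfin : (Set.range (charPair a)).Finite) (hwu : w < u) :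
    (char a u).eval b ⇨ (charAbove a u ⊤).eval b ≤ (charGuard a w).eval b := by
  have hsub : (fun u => himp (char a u) (charAbove a u ⊤)) '' Set.Ioi w ⊆
      (fun p => himp p.1 p.2) '' Set.range (charPair a) := by
    rintro _ ⟨u, -, rfl⟩
    exact ⟨charPair a u, ⟨u, rfl⟩, congrArg (himp _) (snd_charPair a u)⟩
  exact (le_eval_bigSup b ((hfin.image _).subset hsub) ⟨u, hwu, rfl⟩).trans le_sup_right

theorem eval_char_le_charAbove (hfin : (Set.range (charPair a)).Finite) (hwu : w < u)
    (hx : x ∈ u.1) : (char a u).eval b ≤ (charAbove a w x).eval b :=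
  le_eval_bigSup b ((finite_range_char hfin).subset (Set.image_subset_range _ _))
    ⟨u, ⟨hwu, hx⟩, rfl⟩

theorem eval_charAbove_inf_le {c : K}
    (h : ∀ u, w < u → x ∈ u.1 → (char a u).eval b ⊓ c ≤ y) :
    (charAbove a w x).eval b ⊓ c ≤ y :=
  eval_bigSup_inf_le b <| by
    rintro _ ⟨u, ⟨hwu, hx⟩, rfl⟩
    exact h u hwu hx

theorem eval_charAbove_le (h : ∀ u, w < u → x ∈ u.1 → (char a u).eval b ≤ y) :
    (charAbove a w x).eval b ≤ y :=
  eval_bigSup_le b <| by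
    rintro _ ⟨u, ⟨hwu, hx⟩, rfl⟩
    exact h u hwu hx

theorem eval_charAbove_le_charAbove (hfin : (Set.range (charPair a)).Finite)
    (h : ∀ v, u < v → x ∈ v.1 → w < v ∧ z ∈ v.1) :
    (charAbove a u x).eval b ≤ (charAbove a w z).eval b :=
  eval_charAbove_le b fun v huv hx =>
    eval_char_le_charAbove b hfin (h v huv hx).1 (h v huv hx).2

theorem eval_char_inf_le_charAbove_of_lt (hfin : (Set.range (charPair a)).Finite) (hwu : w < u)
    (hneg : x ∉ u.1 → (char a u).eval b ⊓ y ≤ (charAbove a u x).eval b)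
    (hxz : ∀ v, u ≤ v → x ∈ v.1 → z ∈ v.1) :
    (char a u).eval b ⊓ y ≤ (charAbove a w z).eval b := by
  by_cases hx : x ∈ u.1
  · exact inf_le_left.trans (eval_char_le_charAbove b hfin hwu (hxz u le_rfl hx))
  · exact (hneg hx).trans <| eval_charAbove_le_charAbove b hfin fun v huv hxv =>
      ⟨hwu.trans huv, hxz v huv.le hxv⟩

-- Below the guard, `χ_w` drops to `σ_w`, and each `χ_u ≤ σ_w` is handled at `u`.
theorem eval_char_inf_le_charAbove_of_le_charGuard (hfin : (Set.range (charPair a)).Finite)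
    (hy : y ≤ (charGuard a w).eval b)
    (ih : ∀ u, w < u → x ∉ u.1 → (char a u).eval b ⊓ y ≤ (charAbove a u x).eval b) :
    (char a w).eval b ⊓ y ≤ (charAbove a w x).eval b :=
  calc (char a w).eval b ⊓ y ≤ (charAbove a w ⊤).eval b ⊓ y :=
        le_inf ((inf_le_inf_left _ hy).trans (eval_char_inf_charGuard_le b w)) inf_le_right
    _ ≤ (charAbove a w x).eval b := eval_charAbove_inf_le b fun u hwu _ =>
        eval_char_inf_le_charAbove_of_lt b hfin hwu (ih u hwu) fun _ _ => id

-- The two bounds of the proof idea, with `(x, y)` in the role of `(t(a), t(b))`.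
def IsCharBounded (a : Fin l → H) (b : Fin l → K) (x : H) (y : K) : Prop :=
  ∀ w : PrimeFilter H, (x ∈ w.1 → (char a w).eval b ≤ y) ∧
    (x ∉ w.1 → (char a w).eval b ⊓ y ≤ (charAbove a w x).eval b)

theorem isCharBounded_var (hfin : (Set.range (charPair a)).Finite) (i : Fin l) :
    IsCharBounded a b (a i) (b i) := by
  intro w
  refine ⟨eval_char_le_of_mem b, ?_⟩
  induction w using WellFoundedGT.induction with
  | _ w ih =>
    exact fun hi => eval_char_inf_le_charAbove_of_le_charGuard b hfin
      (le_eval_charGuard_of_notMem b hi) ih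

theorem isCharBounded_bot : IsCharBounded a b ⊥ ⊥ :=
  fun w => ⟨fun h => (w.2.bot_notMem h).elim, fun _ => by simp⟩

theorem isCharBounded_top : IsCharBounded a b ⊤ ⊤ :=
  fun _ => ⟨fun _ => le_top, fun h => (h top_mem).elim⟩

theorem IsCharBounded.sup (hfin : (Set.range (charPair a)).Finite)
    (h : IsCharBounded a b x y) (h' : IsCharBounded a b x' y') :
    IsCharBounded a b (x ⊔ x') (y ⊔ y') := by
  intro w
  refine ⟨fun hw => ?_, fun hw => ?_⟩
  · rcases w.2.mem_or_mem hw with hx | hx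
    · exact ((h w).1 hx).trans le_sup_left
    · exact ((h' w).1 hx).trans le_sup_right
  · rw [inf_sup_left]
    refine sup_le (((h w).2 fun hx => hw (mem_of_le le_sup_left hx)).trans ?_)
      (((h' w).2 fun hx => hw (mem_of_le le_sup_right hx)).trans ?_)
    · exact eval_charAbove_le_charAbove b hfin fun v hv hx => ⟨hv, mem_of_le le_sup_left hx⟩
    · exact eval_charAbove_le_charAbove b hfin fun v hv hx => ⟨hv, mem_of_le le_sup_right hx⟩

theorem IsCharBounded.inf (hfin : (Set.range (charPair a)).Finite)
    (h : IsCharBounded a b x y) (h' : IsCharBounded a b x' y') :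
    IsCharBounded a b (x ⊓ x') (y ⊓ y') := by
  intro w
  refine ⟨fun hw => le_inf ((h w).1 (inf_mem_iff.1 hw).1) ((h' w).1 (inf_mem_iff.1 hw).2),
    fun hw => ?_⟩
  by_cases hx : x ∈ w.1
  · calc (char a w).eval b ⊓ (y ⊓ y') ≤ (char a w).eval b ⊓ y' :=
          inf_le_inf_left _ inf_le_right
      _ ≤ (charAbove a w x').eval b := (h' w).2 fun hx' => hw (inf_mem hx hx')
      _ ≤ (charAbove a w (x ⊓ x')).eval b := eval_charAbove_le_charAbove b hfin
          fun v hv hx' => ⟨hv, inf_mem (hv.le hx) hx'⟩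
  · calc (char a w).eval b ⊓ (y ⊓ y') ≤ (charAbove a w x).eval b ⊓ y' :=
          le_inf ((inf_le_inf_left _ inf_le_left).trans ((h w).2 hx))
            (inf_le_right.trans inf_le_right)
      _ ≤ (charAbove a w (x ⊓ x')).eval b := eval_charAbove_inf_le b fun u hwu hxu =>
          eval_char_inf_le_charAbove_of_lt b hfin hwu ((h' u).2)
            fun v huv hx' => inf_mem (huv hxu) hx'

theorem IsCharBounded.himp (hfin : (Set.range (charPair a)).Finite)
    (h : IsCharBounded a b x y) (h' : IsCharBounded a b x' y') :
    IsCharBounded a b (x ⇨ x') (y ⇨ y') := by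
  intro w
  refine ⟨fun hw => le_himp_iff.2 ?_, ?_⟩
  · by_cases hx : x ∈ w.1
    · exact inf_le_left.trans ((h' w).1 (mem_of_le himp_inf_le (inf_mem hw hx)))
    · exact ((h w).2 hx).trans <| eval_charAbove_le b fun u hwu hxu =>
        (h' u).1 (mem_of_le himp_inf_le (inf_mem (hwu.le hw) hxu))
  induction w using WellFoundedGT.induction with
  | _ w ih =>
    intro hw
    obtain ⟨u, hwu, hxu, hx'u⟩ :
        ∃ u : PrimeFilter H, w ≤ u ∧ x ∈ u.1 ∧ x' ∉ u.1 := by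
      by_contra! hcon
      exact hw (himp_mem_iff.2 fun G hG hwG hxG => hcon ⟨G, hG⟩ hwG hxG)
    rcases hwu.lt_or_eq with hwu | rfl
    · refine eval_char_inf_le_charAbove_of_le_charGuard b hfin
        ((le_himp_iff.2 ?_).trans (himp_le_eval_charGuard b hfin hwu)) ih
      rw [inf_comm]
      exact (inf_himp_le_of_le ((h u).1 hxu)).trans <| ((h' u).2 hx'u).trans <|
        eval_charAbove_le_charAbove b hfin fun v hv _ => ⟨hv, top_mem⟩
    · exact (inf_himp_le_of_le ((h w).1 hxu)).trans <| ((h' w).2 hx'u).trans <|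
        eval_charAbove_le_charAbove b hfin fun v hv hx' => ⟨hv, mem_of_le le_himp hx'⟩

theorem isCharBounded_eval (hfin : (Set.range (charPair a)).Finite) (t : HeytingTerm l) :
    IsCharBounded a b (t.eval a) (t.eval b) := by
  induction t with
  | var i => exact isCharBounded_var b hfin i
  | bot => exact isCharBounded_bot b
  | top => exact isCharBounded_top b
  | inf t s ht hs => exact ht.inf b hfin hs
  | sup t s ht hs => exact ht.sup b hfin hs
  | himp t s ht hs => exact ht.himp b hfin hs

end Bounds

section Membership

open Order PFilter

variable {H : Type*} [HeytingAlgebra H] [WellFoundedGT (PrimeFilter H)] {a : Fin l → H}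
  {K : Type*} [HeytingAlgebra K] (b : Fin l → K)

theorem le_of_eval_char_mem (hfin : (Set.range (charPair a)).Finite)
    (hgen : ∀ x : H, ∃ t : HeytingTerm l, t.eval a = x) {v u : PrimeFilter H}
    (h : (char a v).eval a ∈ u.1) : v ≤ u := by
  intro x hx
  obtain ⟨t, rfl⟩ := hgen x
  exact mem_of_le ((isCharBounded_eval a hfin t v).1 hx) h

theorem eval_charAbove_notMem (hfin : (Set.range (charPair a)).Finite)
    (hgen : ∀ x : H, ∃ t : HeytingTerm l, t.eval a = x) (w : PrimeFilter H) (x : H) :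
    (charAbove a w x).eval a ∉ w.1 := fun h => by
  obtain ⟨_, ⟨u, ⟨hwu, -⟩, rfl⟩, hu⟩ := exists_mem_of_eval_bigSup_mem a w.2 h
  exact (le_of_eval_char_mem hfin hgen hu).not_gt hwu

theorem eval_charGuard_notMem (hfin : (Set.range (charPair a)).Finite)
    (hgen : ∀ x : H, ∃ t : HeytingTerm l, t.eval a = x) {w : PrimeFilter H}
    (ih : ∀ u, w < u → (char a u).eval a ∈ u.1) : (charGuard a w).eval a ∉ w.1 :=
    fun h => by
  rcases w.2.mem_or_mem h with h | h
  · obtain ⟨_, ⟨i, hi, rfl⟩, hiw⟩ := exists_mem_of_eval_bigSup_mem a w.2 h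
    exact hi hiw
  · obtain ⟨_, ⟨u, hwu, rfl⟩, huw⟩ := exists_mem_of_eval_bigSup_mem a w.2 h
    have hwu : w < u := hwu
    exact eval_charAbove_notMem hfin hgen u ⊤
      (mem_of_le himp_inf_le (inf_mem (hwu.le huw) (ih u hwu)))

theorem eval_char_mem (hfin : (Set.range (charPair a)).Finite)
    (hgen : ∀ x : H, ∃ t : HeytingTerm l, t.eval a = x) (w : PrimeFilter H) :
    (char a w).eval a ∈ w.1 := by
  induction w using WellFoundedGT.induction with
  | _ w ih =>
    rw [char_eq]
    refine inf_mem (eval_bigInf_mem a (by rintro _ ⟨i, hi, rfl⟩; exact hi))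
      (himp_mem_iff.2 fun G hG hwG hguard => ?_)
    rcases (show w ≤ ⟨G, hG⟩ from hwG).lt_or_eq with hwu | heq
    · exact mem_of_le (eval_char_le_charAbove a hfin hwu top_mem) (ih _ hwu)
    · have hwG : w.1 = G := congrArg Subtype.val heq
      exact (eval_charGuard_notMem hfin hgen ih (hwG ▸ hguard)).elim

theorem eval_bigSup_range_char_eq_top (hfin : (Set.range (charPair a)).Finite)
    (hgen : ∀ x : H, ∃ t : HeytingTerm l, t.eval a = x) :
    (bigSup (Set.range (char a))).eval a = ⊤ := by
  by_contra h
  obtain ⟨F, hF, hF'⟩ := exists_isPrime_notMem h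
  exact hF' (mem_of_le (le_eval_bigSup a (finite_range_char hfin) ⟨⟨F, hF⟩, rfl⟩)
    (eval_char_mem hfin hgen ⟨F, hF⟩))

theorem eval_bigSup_range_char_le (hfin : (Set.range (charPair a)).Finite) {t : HeytingTerm l}
    (ht : t.eval a = ⊤) :
    (bigSup (Set.range (char a))).eval b ≤ t.eval b :=
  eval_bigSup_le b <| by
    rintro _ ⟨w, rfl⟩
    exact (isCharBounded_eval b hfin t w).1 (ht ▸ top_mem)

theorem eval_himp_char_charAbove_eq_top (hfin : (Set.range (charPair a)).Finite)
    {t : HeytingTerm l} {w : PrimeFilter H}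
    (ht : t.eval b = ⊤) (hw : t.eval a ∉ w.1) :
    (himp (char a w) (charAbove a w (t.eval a))).eval b = ⊤ :=
  himp_eq_top_iff.2 (by simpa [ht] using (isCharBounded_eval b hfin t w).2 hw)

theorem eval_himp_char_charAbove_ne_top (hfin : (Set.range (charPair a)).Finite)
    (hgen : ∀ x : H, ∃ t : HeytingTerm l, t.eval a = x)
    (w : PrimeFilter H) (x : H) : (himp (char a w) (charAbove a w x)).eval a ≠ ⊤ := fun h =>
  eval_charAbove_notMem hfin hgen w x
    (mem_of_le (himp_eq_top_iff.1 h) (eval_char_mem hfin hgen w))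

end Membership

section Similarity

open Order

variable {H : Type*} [HeytingAlgebra H] {a : Fin l → H}
  {K : Type*} [HeytingAlgebra K] (b : Fin l → K)

theorem eval_eq_top_iff_of_degree_le {d : ℕ}
    (hgen : ∀ x : H, ∃ t : HeytingTerm l, t.eval a = x)
    (hd : ∀ w : PrimeFilter H, coheight w ≤ d)
    (hagree : ∀ t : HeytingTerm l, t.degree ≤ 2 * d + 2 → (t.eval a = ⊤ ↔ t.eval b = ⊤))
    (t : HeytingTerm l) : t.eval a = ⊤ ↔ t.eval b = ⊤ := by
  have := wellFoundedGT_of_coheight_lt_top fun w => (hd w).trans_lt (ENat.natCast_lt_top d)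
  have hfin := finite_range_charPair a hd
  refine ⟨fun ht => top_unique ?_, fun ht => by_contra fun hta => ?_⟩
  · have hdeg : (bigSup (Set.range (char a))).degree ≤ 2 * d + 2 := degree_bigSup_le <| by
      rintro _ ⟨w, rfl⟩
      exact (degree_char_le a hd w).trans (Nat.le_succ _)
    rw [← (hagree _ hdeg).1 (eval_bigSup_range_char_eq_top hfin hgen)]
    exact eval_bigSup_range_char_le b hfin ht
  · obtain ⟨F, hF, htF⟩ := PFilter.exists_isPrime_notMem hta
    have hdeg :
        (himp (char a ⟨F, hF⟩) (charAbove a ⟨F, hF⟩ (t.eval a))).degree ≤ 2 * d + 2 :=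
      Nat.succ_le_succ (max_le (degree_char_le a hd _) (degree_charAbove_le a hd _ _))
    exact eval_himp_char_charAbove_ne_top hfin hgen _ _
      ((hagree _ hdeg).2 (eval_himp_char_charAbove_eq_top b hfin ht htF))

end Similarity

section Generated

variable {H : Type*} [HeytingAlgebra H] {a : Fin l → H} {x y : H}

theorem map_eval {α β : Type*} [HeytingAlgebra α] [HeytingAlgebra β] (f : HeytingHom α β)
    (a : Fin l → α) (t : HeytingTerm l) : f (t.eval a) = t.eval (f ∘ a) := by
  induction t <;> simp [eval, *]

def termValues (a : Fin l → H) : Set H := Set.range fun t : HeytingTerm l => t.eval a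

theorem sup_mem_termValues (hx : x ∈ termValues a) (hy : y ∈ termValues a) :
    x ⊔ y ∈ termValues a := by
  obtain ⟨⟨t, rfl⟩, ⟨s, rfl⟩⟩ := And.intro hx hy
  exact ⟨t.sup s, rfl⟩

theorem inf_mem_termValues (hx : x ∈ termValues a) (hy : y ∈ termValues a) :
    x ⊓ y ∈ termValues a := by
  obtain ⟨⟨t, rfl⟩, ⟨s, rfl⟩⟩ := And.intro hx hy
  exact ⟨t.inf s, rfl⟩

theorem himp_mem_termValues (hx : x ∈ termValues a) (hy : y ∈ termValues a) :
    x ⇨ y ∈ termValues a := by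
  obtain ⟨⟨t, rfl⟩, ⟨s, rfl⟩⟩ := And.intro hx hy
  exact ⟨t.himp s, rfl⟩

instance : Max (termValues a) := ⟨fun x y => ⟨x ⊔ y, sup_mem_termValues x.2 y.2⟩⟩
instance : Min (termValues a) := ⟨fun x y => ⟨x ⊓ y, inf_mem_termValues x.2 y.2⟩⟩
instance : HImp (termValues a) := ⟨fun x y => ⟨x ⇨ y, himp_mem_termValues x.2 y.2⟩⟩
instance : Top (termValues a) := ⟨⟨⊤, top, rfl⟩⟩
instance : Bot (termValues a) := ⟨⟨⊥, bot, rfl⟩⟩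
instance : Compl (termValues a) := ⟨fun x => x ⇨ ⊥⟩

instance : HeytingAlgebra (termValues a) :=
  Subtype.coe_injective.heytingAlgebra _ Iff.rfl Iff.rfl (fun _ _ => rfl) (fun _ _ => rfl) rfl rfl
    (fun x => himp_bot (x : H)) fun _ _ => rfl

def termValues.subtype (a : Fin l → H) : HeytingHom (termValues a) H where
  toFun := Subtype.val
  map_sup' _ _ := rfl
  map_inf' _ _ := rfl
  map_bot' := rfl
  map_himp' _ _ := rfl

def termValues.gen (a : Fin l → H) (i : Fin l) : termValues a := ⟨a i, var i, rfl⟩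

theorem termValues.subtype_eval_gen (t : HeytingTerm l) :
    termValues.subtype a (t.eval (termValues.gen a)) = t.eval a :=
  map_eval _ _ t

theorem termValues.subtype_injective : Function.Injective (termValues.subtype a) :=
  Subtype.val_injective

theorem termValues.eval_gen_eq_top_iff (t : HeytingTerm l) :
    t.eval (termValues.gen a) = ⊤ ↔ t.eval a = ⊤ := by
  rw [← termValues.subtype_eval_gen (a := a) t, ← map_top (termValues.subtype a),
    termValues.subtype_injective.eq_iff]

theorem termValues.exists_eval_gen_eq (x : termValues a) :
    ∃ t : HeytingTerm l, t.eval (termValues.gen a) = x := by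
  obtain ⟨t, ht⟩ := x.2
  exact ⟨t, Subtype.ext ((termValues.subtype_eval_gen t).trans ht)⟩

end Generated

end HeytingTerm

/-- For each `d` there is an `n` such that over Heyting algebras of dimension `≤ d`,
agreement of two tuples on all term-equations of degree `≤ n` implies agreement on all
term-equations. -/
theorem similar_of_simDeg_dim_le (d : ℕ) :
    ∃ n : ℕ, ∀ (l : ℕ) (H : Type*) (H' : Type*) [HeytingAlgebra H] [HeytingAlgebra H']
      (a : Fin l → H) (a' : Fin l → H'), DimLE H d →
      (∀ t : HeytingTerm l, t.degree ≤ n → (t.eval a = ⊤ ↔ t.eval a' = ⊤)) →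
      ∀ t : HeytingTerm l, t.eval a = ⊤ ↔ t.eval a' = ⊤ := by
  refine ⟨2 * d + 2, fun l H H' _ _ a a' hdim hagree t => ?_⟩
  rw [← HeytingTerm.termValues.eval_gen_eq_top_iff]
  refine HeytingTerm.eval_eq_top_iff_of_degree_le a' HeytingTerm.termValues.exists_eval_gen_eq
    (hdim.of_injective _ HeytingTerm.termValues.subtype_injective).coheight_le (fun s hs => ?_) t
  rw [HeytingTerm.termValues.eval_gen_eq_top_iff]
  exact hagree s hs
end

section
/- If a Heyting algebra H has the Splitting property, then H has no atoms and no coatoms; that is, there is no a ∈ H such that a covers ⊥, and no c ∈ H such that ⊤ covers c. -/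
/-- The Density property. -/
def HasDensity (H : Type*) [HeytingAlgebra H] : Prop :=
  ∀ a c : H, StrongOrd c a → a ≠ ⊤ → ∃ b : H, b ≠ ⊤ ∧ StrongOrd c b ∧ StrongOrd b a

/-- The Splitting property. -/
def HasSplitting (H : Type*) [HeytingAlgebra H] : Prop :=
  ∀ a b₁ b₂ : H, StrongOrd (b₁ ⊓ b₂) a → a ≠ ⊤ →
    ∃ a₁ a₂ : H, a₁ ≠ ⊤ ∧ a₂ ≠ ⊤ ∧ a₂ ⇨ a = a₁ ∧ a₁ ⇨ a = a₂ ∧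
      a₁ ≤ b₁ ∧ a₂ ≤ b₂ ∧ a₁ ⊔ a₂ = b₁ ⊔ b₂

/-- A Heyting algebra with the Splitting property has no atoms and no coatoms. -/
theorem no_atoms_no_coatoms_of_splitting (H : Type*) [HeytingAlgebra H]
    (hs : HasSplitting H) : (¬ ∃ a : H, ⊥ ⋖ a) ∧ ¬ ∃ c : H, c ⋖ ⊤ := by
  constructor
  · rintro ⟨t, ht⟩
    have htbot : t ≠ ⊥ := ht.lt.ne'
    -- t is an atom: for any x, either t ≤ x or t ⊓ x = ⊥
    have hatom : ∀ x : H, t ≤ x ∨ t ⊓ x = ⊥ := by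
      intro x
      by_cases h : t ≤ x
      · exact Or.inl h
      · right
        by_contra hne
        have h1 : ⊥ < t ⊓ x := (bot_lt_iff_ne_bot).mpr hne
        have h2 : t ⊓ x < t := lt_of_le_of_ne inf_le_left (fun he => h (he ▸ inf_le_right))
        exact ht.2 h1 h2
    have hctop : tᶜ ≠ ⊤ := by
      intro h
      apply htbot
      have : t ≤ tᶜ := h ▸ le_top
      simpa using le_compl_iff_disjoint_right.mp this |>.le_bot
    have hso : StrongOrd ((⊤ : H) ⊓ ⊤) tᶜ := by
      constructor <;> simp
    obtain ⟨a₁, a₂, ha₁, ha₂, h21, h12, _, _, _⟩ := hs tᶜ ⊤ ⊤ hso hctop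
    have hta₁ : t ≤ a₁ := by
      rcases hatom a₁ with h | h
      · exact h
      · exfalso; apply ha₂
        rw [← h12, himp_eq_top_iff]
        exact le_compl_iff_disjoint_right.mpr (disjoint_iff.mpr (by rwa [inf_comm]))
    have hta₂ : t ≤ a₂ := by
      rcases hatom a₂ with h | h
      · exact h
      · exfalso; apply ha₁
        rw [← h21, himp_eq_top_iff]
        exact le_compl_iff_disjoint_right.mpr (disjoint_iff.mpr (by rwa [inf_comm]))
    have : t ≤ tᶜ := by
      calc t ≤ a₁ ⊓ a₂ := le_inf hta₁ hta₂
        _ = (a₂ ⇨ tᶜ) ⊓ a₂ := by rw [h21]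
        _ ≤ tᶜ := himp_inf_le
    apply htbot
    have := le_compl_iff_disjoint_right.mp this |>.le_bot
    simpa using this
  · rintro ⟨c, hc⟩
    have hctop : c ≠ ⊤ := hc.lt.ne
    have hso : StrongOrd ((⊤ : H) ⊓ ⊤) c := by constructor <;> simp
    obtain ⟨a₁, a₂, ha₁, ha₂, h21, h12, _, _, hsup⟩ := hs c ⊤ ⊤ hso hctop
    have hca₁ : c ≤ a₁ := h21 ▸ le_himp_iff.mpr inf_le_left
    have hca₂ : c ≤ a₂ := h12 ▸ le_himp_iff.mpr inf_le_left
    have he₁ : a₁ = c := by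
      by_contra hne
      exact hc.2 (lt_of_le_of_ne hca₁ (Ne.symm hne)) (lt_of_le_of_ne le_top ha₁)
    have he₂ : a₂ = c := by
      by_contra hne
      exact hc.2 (lt_of_le_of_ne hca₂ (Ne.symm hne)) (lt_of_le_of_ne le_top ha₂)
    apply hctop
    rw [he₁, he₂] at hsup
    simpa using hsup
end
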